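/- For any real θ, ∑_{n=−∞}^∞ 2^{−n(n−1)/2}·2^{−θn} = 2^{1/8}·√(2π/log 2)·2^{−θ(1−θ)/2}·(1 + 2·∑_{k=1}^∞ e^{−2k²π²/log 2}·cos(2kπ(1/2 − θ))). -/

import Mathlib

/-!
The left side is a value `θ(z, τ)` of Jacobi's theta function with `z` and `τ` on the imaginary
axis. The modular transformation `τ ↦ -1/τ` (Poisson summation for the Gaussian) moves `z` to the
real axis, where pairing the terms `n` and `-n` of the theta series gives a cosine series.
-/

open Real

open Complex in
lemma hasSum_jacobiTheta₂_cos (z : ℂ) {τ : ℂ} (hτ : 0 < im τ) :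
    HasSum (fun n : ℤ ↦ cexp (π * I * n ^ 2 * τ) * Complex.cos (2 * π * n * z))
      (jacobiTheta₂ z τ) := by
  have h := ((hasSum_jacobiTheta₂_term z hτ).add (hasSum_jacobiTheta₂_term (-z) hτ)).div_const 2
  rw [jacobiTheta₂_neg_left, ← two_mul, mul_div_cancel_left₀ _ two_ne_zero] at h
  refine h.congr_fun fun n ↦ ?_
  rw [eq_div_iff two_ne_zero, mul_assoc, mul_comm (Complex.cos _), two_cos, mul_add,
    ← Complex.exp_add, ← Complex.exp_add, jacobiTheta₂_term, jacobiTheta₂_term]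
  ring_nf

open Complex in
lemma jacobiTheta₂_eq_one_add_two_mul_tsum_cos (z : ℂ) {τ : ℂ} (hτ : 0 < im τ) :
    jacobiTheta₂ z τ = 1 + 2 * ∑' n : ℕ,
      cexp (π * I * ((n : ℂ) + 1) ^ 2 * τ) * Complex.cos (2 * π * (n + 1) * z) := by
  have h := hasSum_jacobiTheta₂_cos z hτ
  have heven : Function.Even fun n : ℤ ↦ cexp (π * I * n ^ 2 * τ) * Complex.cos (2 * π * n * z) :=
    fun n ↦ by simp only [Int.cast_neg, neg_sq, mul_neg, neg_mul, Complex.cos_neg]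
  rw [← h.tsum_eq, tsum_int_eq_zero_add_two_mul_tsum_pnat heven h.summable,
    tsum_pnat_eq_tsum_succ (f := fun n : ℕ ↦
      cexp (π * I * ((n : ℤ) : ℂ) ^ 2 * τ) * Complex.cos (2 * π * ((n : ℤ) : ℂ) * z))]
  simp

open Complex in
theorem Real.tsum_exp_neg_quadratic {t : ℝ} (ht : 0 < t) (y : ℝ) :
    ∑' n : ℤ, rexp (-π * t * n ^ 2 + 2 * π * y * n) =
      1 / √t * rexp (π * y ^ 2 / t) *
        (1 + 2 * ∑' k : ℕ, rexp (-π * (k + 1) ^ 2 / t) * Real.cos (2 * π * (k + 1) * (y / t))) := by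
  have ht' : (t : ℂ) ≠ 0 := ofReal_ne_zero.mpr ht.ne'
  have hsqrt : (-I * (I * t)) ^ (1 / 2 : ℂ) = (√t : ℂ) := by
    rw [← mul_assoc, neg_mul, I_mul_I, neg_neg, one_mul, Real.sqrt_eq_rpow, ofReal_cpow ht.le]
    norm_num
  have hexp : -π * I * (I * y) ^ 2 / (I * t) = ((π * y ^ 2 / t : ℝ) : ℂ) := by
    push_cast
    field_simp
    ring_nf
    rw [I_sq]
    ring
  have hz : I * y / (I * t) = ((y / t : ℝ) : ℂ) := by
    push_cast
    field_simp
  have hτ : -1 / (I * t) = I * ((1 / t : ℝ) : ℂ) := by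
    push_cast
    field_simp
    rw [I_sq]
  have hτ_im : 0 < (I * ((1 / t : ℝ) : ℂ)).im := by simpa using ht
  apply ofReal_injective
  calc ((∑' n : ℤ, rexp (-π * t * n ^ 2 + 2 * π * y * n) : ℝ) : ℂ)
      = jacobiTheta₂ (-(I * y)) (I * t) := by
        rw [ofReal_tsum, jacobiTheta₂]
        refine tsum_congr fun n ↦ ?_
        rw [jacobiTheta₂_term, ofReal_exp]
        push_cast
        ring_nf
        rw [I_sq]
        ring_nf
    _ = 1 / (√t : ℂ) * (rexp (π * y ^ 2 / t) : ℂ) * jacobiTheta₂ (y / t : ℝ) (I * (1 / t : ℝ)) := by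
        rw [jacobiTheta₂_neg_left, jacobiTheta₂_functional_equation, hsqrt, hexp, hz, hτ,
          ofReal_exp]
    _ = _ := by
        rw [jacobiTheta₂_eq_one_add_two_mul_tsum_cos _ hτ_im]
        push_cast
        congr 4 with k
        ring_nf
        rw [I_sq]
        ring_nf

theorem gaussian_poisson_summation (θ : ℝ) :
    ∑' n : ℤ, (2 : ℝ) ^ (-((n : ℝ) * ((n : ℝ) - 1)) / 2) * (2 : ℝ) ^ (-θ * (n : ℝ)) =
      (2 : ℝ) ^ ((1 : ℝ) / 8) * Real.sqrt (2 * π / Real.log 2) *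
        (2 : ℝ) ^ (-θ * (1 - θ) / 2) *
        (1 + 2 * ∑' k : ℕ,
          Real.exp (-2 * ((k : ℝ) + 1) ^ 2 * π ^ 2 / Real.log 2) *
            Real.cos (2 * ((k : ℝ) + 1) * π * (1 / 2 - θ))) := by
  set L := Real.log 2
  have hL : 0 < L := Real.log_pos one_lt_two
  have hrpow (a b : ℝ) : (2 : ℝ) ^ a * (2 : ℝ) ^ b = rexp (L * (a + b)) := by
    rw [← Real.rpow_add two_pos, Real.rpow_def_of_pos two_pos]
  have hsqrt : 1 / √(L / (2 * π)) = √(2 * π / L) := by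
    rw [one_div, ← Real.sqrt_inv, inv_div]
  have hy : L * (1 / 2 - θ) / (2 * π) / (L / (2 * π)) = 1 / 2 - θ := by
    field_simp
  calc _ = ∑' n : ℤ, rexp (-π * (L / (2 * π)) * n ^ 2 + 2 * π * (L * (1 / 2 - θ) / (2 * π)) * n) :=
        tsum_congr fun n ↦ by
          rw [hrpow]
          congr 1
          field_simp
          ring
    _ = _ := by
        rw [Real.tsum_exp_neg_quadratic (by positivity), hsqrt, hy, mul_right_comm _ √_, hrpow,
          mul_comm √_]
        congr 4
        · field_simp
          ring
        · ext k
          congr 1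
          · congr 1
            field_simp
          · congr 1
            ring
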